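/- Let C ≥ 1 and let B₀, A₋₁, A₀, A₁, C₀ be n×n real matrices; let Q be the (C+1)n×(C+1)n block tridiagonal matrix with level-0 diagonal block B₀, diagonal blocks A₀ at levels 1,…,C−1, level-C diagonal block C₀, superdiagonal blocks A₁ and subdiagonal blocks A₋₁. Let R and R̂ be n×n real matrices satisfying A₁ + R A₀ + R² A₋₁ = 0 and A₋₁ + R̂ A₀ + R̂² A₁ = 0. Suppose the row vectors v₀, v_C ∈ ℝⁿ satisfy v₀(B₀ + R A₋₁) + v_C R̂^{C−1}(R̂ B₀ + A₋₁) = 0 and v₀ R^{C−1}(R C₀ + A₁) + v_C(C₀ + R̂ A₁) = 0. Then the row vector π with level blocks π_k = v₀ Rᵏ + v_C R̂^{C−k}, for 0 ≤ k ≤ C, satisfies πQ = 0; that is, π₀B₀ + π₁A₋₁ = 0, π_{k−1}A₁ + π_k A₀ + π_{k+1}A₋₁ = 0 for 1 ≤ k ≤ C−1, and π_{C−1}A₁ + π_C C₀ = 0. -/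

import Mathlib

/-!
Because `R` solves `A₁ + R A₀ + R² A₋₁ = 0`, multiplying it on the left by `v₀ Rᵃ` shows that
`k ↦ v₀ Rᵏ` satisfies the interior balance equation `x_{k-1} A₁ + x_k A₀ + x_{k+1} A₋₁ = 0`.
`R̂` solves the same equation with `A₁` and `A₋₁` exchanged, so `k ↦ v_C R̂^{C-k}` satisfies it
too, and so does their sum `π_k`. Expanding `π₀, π₁` and `π_{C-1}, π_C` turns the balance
equations at levels `0` and `C` into exactly the two boundary equations for `(v₀, v_C)`; the one
at level `C` is the one at level `0` for the reflected levels `k ↦ C - k`. Since `Q` is block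
tridiagonal, `πQ` is, level by level, the left-hand side of these balance equations.
-/

open Matrix

theorem pow_mul_add_eq_zero_of_quadratic {M : Type*} [Semiring M] {R A B C : M}
    (h : A + R * B + R ^ 2 * C = 0) (a : ℕ) :
    R ^ a * A + R ^ (a + 1) * B + R ^ (a + 2) * C = 0 := by
  simpa only [mul_add, mul_zero, ← mul_assoc, ← pow_succ, ← pow_add]
    using congrArg (R ^ a * ·) h

section BlockTridiagonal

variable {n α : Type*} [Fintype n] [NonUnitalNonAssocSemiring α]

def blockTridiagonal {N : ℕ} (D : ℕ → Matrix n n α) (U L : Matrix n n α) :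
    Matrix (Fin N × n) (Fin N × n) α :=
  of fun p q =>
    if p.1 = q.1 then D p.1 p.2 q.2
    else if (q.1 : ℕ) = p.1 + 1 then U p.2 q.2
    else if (p.1 : ℕ) = q.1 + 1 then L p.2 q.2
    else 0

theorem vecMul_blockTridiagonal_apply {N : ℕ} (D : ℕ → Matrix n n α) (U L : Matrix n n α)
    (x : ℕ → n → α) (q : Fin N) (j : n) :
    ((fun p : Fin N × n => x p.1 p.2) ᵥ* blockTridiagonal D U L) (q, j) =
      ((if (q : ℕ) = 0 then 0 else x (q - 1) ᵥ* U) + x q ᵥ* D q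
        + if (q : ℕ) + 1 < N then x (q + 1) ᵥ* L else 0) j := by
  have hlevel : ∀ l : Fin N, ∑ i, x l i * blockTridiagonal D U L (l, i) (q, j) =
      (if (l : ℕ) = q then (x l ᵥ* D l) j else 0)
        + (if (q : ℕ) = l + 1 then (x l ᵥ* U) j else 0)
        + (if (l : ℕ) = q + 1 then (x l ᵥ* L) j else 0) := by
    intro l
    simp only [blockTridiagonal, of_apply, Fin.ext_iff]
    split_ifs <;> first | omega | simp [vecMul, dotProduct]
  obtain ⟨k, hk⟩ := q
  rw [vecMul, dotProduct, Fintype.sum_prod_type]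
  simp only [hlevel, Finset.sum_add_distrib]
  rw [Fin.sum_univ_eq_sum_range (fun l => if l = k then (x l ᵥ* D l) j else 0),
    Fin.sum_univ_eq_sum_range (fun l => if k = l + 1 then (x l ᵥ* U) j else 0),
    Fin.sum_univ_eq_sum_range (fun l => if l = k + 1 then (x l ᵥ* L) j else 0)]
  rcases k with _ | k
  · simp [Finset.sum_ite_eq', hk, ite_apply]
  · simp [Finset.sum_ite_eq', hk, Nat.lt_of_succ_lt hk, ite_apply]
    abel

theorem vecMul_blockTridiagonal_eq_zero {C : ℕ} (hC : 1 ≤ C) {D : ℕ → Matrix n n α}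
    {U L : Matrix n n α} {x : ℕ → n → α}
    (hbottom : x 0 ᵥ* D 0 + x 1 ᵥ* L = 0)
    (hinterior : ∀ k, 1 ≤ k → k + 1 ≤ C →
      x (k - 1) ᵥ* U + x k ᵥ* D k + x (k + 1) ᵥ* L = 0)
    (htop : x (C - 1) ᵥ* U + x C ᵥ* D C = 0) :
    (fun p : Fin (C + 1) × n => x p.1 p.2) ᵥ* blockTridiagonal D U L = 0 := by
  ext ⟨⟨k, hk⟩, j⟩
  rw [vecMul_blockTridiagonal_apply]
  obtain rfl | hk0 := Nat.eq_zero_or_pos k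
  · simpa [show 1 < C + 1 by omega] using congrFun hbottom j
  obtain rfl | hkC := eq_or_lt_of_le (Nat.le_of_lt_succ hk)
  · simpa [hk0.ne'] using congrFun htop j
  · simpa [hk0.ne', hkC] using congrFun (hinterior k hk0 hkC) j

end BlockTridiagonal

section GeometricLevels

variable {n α : Type*} [Fintype n] [DecidableEq n] [Semiring α]

def geometricLevel (v w : n → α) (R Rh : Matrix n n α) (C k : ℕ) : n → α :=
  v ᵥ* R ^ k + w ᵥ* Rh ^ (C - k)

variable {v w : n → α} {R Rh : Matrix n n α} {C : ℕ}

theorem geometricLevel_reflect {k : ℕ} (hk : k ≤ C) :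
    geometricLevel v w R Rh C k = geometricLevel w v Rh R C (C - k) := by
  rw [geometricLevel, geometricLevel, Nat.sub_sub_self hk, add_comm]

theorem geometricLevel_balance_interior {A1 A0 Am : Matrix n n α}
    (hR : A1 + R * A0 + R ^ 2 * Am = 0) (hRh : Am + Rh * A0 + Rh ^ 2 * A1 = 0)
    {k : ℕ} (hk : 1 ≤ k) (hkC : k + 1 ≤ C) :
    geometricLevel v w R Rh C (k - 1) ᵥ* A1 + geometricLevel v w R Rh C k ᵥ* A0
      + geometricLevel v w R Rh C (k + 1) ᵥ* Am = 0 := by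
  obtain ⟨a, rfl⟩ : ∃ a, k = a + 1 := ⟨k - 1, by omega⟩
  obtain ⟨b, rfl⟩ : ∃ b, C = a + b + 2 := ⟨C - a - 2, by omega⟩
  have hbalance : v ᵥ* (R ^ a * A1 + R ^ (a + 1) * A0 + R ^ (a + 2) * Am)
      + w ᵥ* (Rh ^ b * Am + Rh ^ (b + 1) * A0 + Rh ^ (b + 2) * A1) = 0 := by
    rw [pow_mul_add_eq_zero_of_quadratic hR, pow_mul_add_eq_zero_of_quadratic hRh]
    simp
  rw [← hbalance]
  simp only [geometricLevel, Nat.add_sub_cancel, show a + b + 2 - a = b + 2 by omega,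
    show a + b + 2 - (a + 1) = b + 1 by omega, show a + 1 + 1 = a + 2 from rfl,
    show a + b + 2 - (a + 2) = b by omega, add_vecMul, vecMul_add, vecMul_vecMul]
  abel

theorem geometricLevel_balance_bottom {B L : Matrix n n α} (hC : 1 ≤ C) :
    geometricLevel v w R Rh C 0 ᵥ* B + geometricLevel v w R Rh C 1 ᵥ* L
      = v ᵥ* (B + R * L) + w ᵥ* (Rh ^ (C - 1) * (Rh * B + L)) := by
  obtain ⟨m, rfl⟩ : ∃ m, C = m + 1 := ⟨C - 1, by omega⟩
  simp only [geometricLevel, pow_zero, pow_one, vecMul_one, Nat.sub_zero, Nat.add_sub_cancel,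
    add_vecMul, vecMul_add, vecMul_vecMul, mul_add, ← mul_assoc, ← pow_succ]
  abel

theorem geometricLevel_balance_top {B U : Matrix n n α} (hC : 1 ≤ C) :
    geometricLevel v w R Rh C (C - 1) ᵥ* U + geometricLevel v w R Rh C C ᵥ* B
      = v ᵥ* (R ^ (C - 1) * (R * B + U)) + w ᵥ* (B + Rh * U) := by
  rw [geometricLevel_reflect (Nat.sub_le C 1), geometricLevel_reflect le_rfl, Nat.sub_sub_self hC,
    Nat.sub_self, add_comm, geometricLevel_balance_bottom hC, add_comm]

end GeometricLevels

/-- (Corollary 7 of the paper.) If `R`, `R̂` (here `Rh`) solve the row-vector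
quadratic equations `A₁ + RA₀ + R²A₋₁ = 0` and `A₋₁ + R̂A₀ + R̂²A₁ = 0`, and the row vectors
`v₀`, `v_C` solve the indicated boundary system, then the row vector with level blocks
`π_k = v₀ Rᵏ + v_C R̂^{C−k}` satisfies `πQ = 0` for the block tridiagonal QBD generator `Q`;
that is, `π₀B₀ + π₁A₋₁ = 0`, `π_{k−1}A₁ + π_kA₀ + π_{k+1}A₋₁ = 0` for `1 ≤ k ≤ C−1`, and
`π_{C−1}A₁ + π_C C₀ = 0`. Here `Am`, `A0`, `A1`, `B0`, `C0` denote `A₋₁`, `A₀`, `A₁`, `B₀`,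
`C₀`, and `vC` denotes `v_C`. -/
theorem stationary_distribution_QBD_blocks
    (n : ℕ) (C : ℕ) (hC : 1 ≤ C)
    (B0 Am A0 A1 C0 : Matrix (Fin n) (Fin n) ℝ)
    (Q : Matrix (Fin (C + 1) × Fin n) (Fin (C + 1) × Fin n) ℝ)
    (hQ : ∀ p q : Fin (C + 1) × Fin n, Q p q =
      if p.1 = q.1 then
        (if (p.1 : ℕ) = 0 then B0 p.2 q.2
         else if (p.1 : ℕ) = C then C0 p.2 q.2
         else A0 p.2 q.2)
      else if (q.1 : ℕ) = (p.1 : ℕ) + 1 then A1 p.2 q.2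
      else if (p.1 : ℕ) = (q.1 : ℕ) + 1 then Am p.2 q.2
      else 0)
    (R Rh : Matrix (Fin n) (Fin n) ℝ)
    (hR : A1 + R * A0 + R ^ 2 * Am = 0)
    (hRh : Am + Rh * A0 + Rh ^ 2 * A1 = 0)
    (v0 vC : Fin n → ℝ)
    (hbc0 : v0 ᵥ* (B0 + R * Am) + vC ᵥ* (Rh ^ (C - 1) * (Rh * B0 + Am)) = 0)
    (hbcC : v0 ᵥ* (R ^ (C - 1) * (R * C0 + A1)) + vC ᵥ* (C0 + Rh * A1) = 0)
    (πb : ℕ → Fin n → ℝ)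
    (hπb : ∀ k, k ≤ C → πb k = v0 ᵥ* (R ^ k) + vC ᵥ* (Rh ^ (C - k)))
    (π : Fin (C + 1) × Fin n → ℝ)
    (hπ : ∀ p : Fin (C + 1) × Fin n, π p = πb (p.1 : ℕ) p.2) :
    π ᵥ* Q = 0 ∧
    (πb 0 ᵥ* B0 + πb 1 ᵥ* Am = 0) ∧
    (∀ k, 1 ≤ k → k ≤ C - 1 →
      πb (k - 1) ᵥ* A1 + πb k ᵥ* A0 + πb (k + 1) ᵥ* Am = 0) ∧
    (πb (C - 1) ᵥ* A1 + πb C ᵥ* C0 = 0) := by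
  have hlevel : ∀ k ≤ C, πb k = geometricLevel v0 vC R Rh C k := hπb
  have hbottom : πb 0 ᵥ* B0 + πb 1 ᵥ* Am = 0 := by
    rw [hlevel 0 C.zero_le, hlevel 1 hC, geometricLevel_balance_bottom hC, hbc0]
  have hinterior : ∀ k, 1 ≤ k → k ≤ C - 1 →
      πb (k - 1) ᵥ* A1 + πb k ᵥ* A0 + πb (k + 1) ᵥ* Am = 0 := fun k hk hkC => by
    rw [hlevel (k - 1) (by omega), hlevel k (by omega), hlevel (k + 1) (by omega)]
    exact geometricLevel_balance_interior hR hRh hk (by omega)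
  have htop : πb (C - 1) ᵥ* A1 + πb C ᵥ* C0 = 0 := by
    rw [hlevel (C - 1) (by omega), hlevel C le_rfl, geometricLevel_balance_top hC, hbcC]
  refine ⟨?_, hbottom, hinterior, htop⟩
  have hQ_block : Q = blockTridiagonal (fun l => if l = 0 then B0 else if l = C then C0 else A0)
      A1 Am := by
    ext p q
    rw [hQ]
    simp only [blockTridiagonal, of_apply]
    split_ifs <;> rfl
  rw [show π = fun p => πb p.1 p.2 from funext hπ, hQ_block]
  refine vecMul_blockTridiagonal_eq_zero hC (by simpa using hbottom) (fun k hk hkC => ?_)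
    (by simpa [show C ≠ 0 by omega] using htop)
  simpa [show k ≠ 0 by omega, show k ≠ C by omega] using hinterior k hk (by omega)
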